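/- arXiv:2002.05711 — 11 statements merged into one kernel-verified Lean document; each statement's English description precedes it below -/
import Mathlib

section
/- If S is an exponential random variable with rate μ > 0 and Z is an independent exponential random variable with rate λ > 0, then (E[(S+Z)²]/2 + (E[S]+E[Z])·E[S]) / (E[S]+E[Z]) = 1/λ + 2/μ − 1/(λ+μ). -/
/-- If `S ~ Exp(μ)` and `Z ~ Exp(lam)` are independent (so the moments are as
in the hypotheses), then
`(E[(S+Z)²]/2 + (E[S]+E[Z])·E[S]) / (E[S]+E[Z]) = 1/lam + 2/μ − 1/(lam+μ)`. -/
theorem mm1_blocking_age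
    (μ lam ES ES2 EZ EZ2 ESZ : ℝ) (hμ : 0 < μ) (hlam : 0 < lam)
    (hES : ES = 1 / μ) (hES2 : ES2 = 2 / μ ^ 2)
    (hEZ : EZ = 1 / lam) (hEZ2 : EZ2 = 2 / lam ^ 2)
    (hind : ESZ = ES * EZ) :
    ((ES2 + 2 * ESZ + EZ2) / 2 + (ES + EZ) * ES) / (ES + EZ)
      = 1 / lam + 2 / μ - 1 / (lam + μ) := by
  subst hES hEZ hES2 hEZ2 hind
  have hμ' := hμ.ne'
  have hl' := hlam.ne'
  have hs : lam + μ ≠ 0 := by positivity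
  have hsum : (1/μ + 1/lam) ≠ 0 := by positivity
  field_simp
  ring
end

section
/- Let λ, μ_b, μ_g > 0 with μ_g > μ_b. Define Y_b = 1/μ_b + 1/λ, Y_g = 1/μ_g + 1/λ, Q_b(2) = 2/μ_b² + 2/λ² + 2/(λμ_b), Q_g(2) = 2/μ_g² + 2/λ² + 2/(λμ_g). Then Y_b · Q_g(2) − Y_g · Q_b(2) < 0. -/
/-- Key inequality `E[Y_b]E[Y_g²] − E[Y_g]E[Y_b²] < 0` for Lemma 1. -/
theorem key_inequality_lemma1
    (lam μb μg : ℝ) (hlam : 0 < lam) (hμb : 0 < μb) (hμg : 0 < μg)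
    (h : μb < μg) :
    (1 / μb + 1 / lam) * (2 / μg ^ 2 + 2 / lam ^ 2 + 2 / (lam * μg))
      - (1 / μg + 1 / lam) * (2 / μb ^ 2 + 2 / lam ^ 2 + 2 / (lam * μb)) < 0 := by
  set a := 1 / μb with ha
  set g := 1 / μg with hg
  set l := 1 / lam with hl
  have hpa : 0 < a := by positivity
  have hpg : 0 < g := by positivity
  have hpl : 0 < l := by positivity
  have hga : g < a := by
    rw [ha, hg]
    exact one_div_lt_one_div_of_lt hμb h
  have e1 : 2 / μg ^ 2 = 2 * g ^ 2 := by rw [hg]; field_simp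
  have e2 : 2 / μb ^ 2 = 2 * a ^ 2 := by rw [ha]; field_simp
  have e3 : 2 / lam ^ 2 = 2 * l ^ 2 := by rw [hl]; field_simp
  have e4 : 2 / (lam * μg) = 2 * l * g := by rw [hl, hg]; field_simp
  have e5 : 2 / (lam * μb) = 2 * l * a := by rw [hl, ha]; field_simp
  rw [e1, e2, e3, e4, e5]
  nlinarith [mul_pos (sub_pos.mpr hga) (by positivity : (0:ℝ) < a * g + l * (a + g))]
end

section
/- Let λ, μ_b, μ_g > 0 with μ_g > μ_b, and for p, q ∈ (0,1) define Δ(p,q) = (q·EQ_b + p·EQ_g)/(q·EY_b + p·EY_g), where EY_b = 1/μ_b + 1/λ, EY_g = 1/μ_g + 1/λ, EQ_b = (2/μ_b² + 2/λ² + 2/(λμ_b))/2 + EY_b·(p/μ_g + (1−p)/μ_b), EQ_g = (2/μ_g² + 2/λ² + 2/(λμ_g))/2 + EY_g·(q/μ_b + (1−q)/μ_g). Then for every fixed q ∈ (0,1), the function p ↦ Δ(p,q) is strictly decreasing on (0,1). -/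
/-- Gilbert–Elliot server: the average age `Δ(p,q)` is strictly decreasing in
`p` on `(0,1)` for every fixed `q ∈ (0,1)`. -/
theorem age_strictAnti_in_p_GE_server
    (lam μb μg : ℝ) (hlam : 0 < lam) (hμb : 0 < μb) (hμg : 0 < μg)
    (h : μb < μg)
    (Δ : ℝ → ℝ → ℝ)
    (hΔ : ∀ p q : ℝ, Δ p q =
      (q * ((2 / μb ^ 2 + 2 / lam ^ 2 + 2 / (lam * μb)) / 2
              + (1 / μb + 1 / lam) * (p / μg + (1 - p) / μb))
        + p * ((2 / μg ^ 2 + 2 / lam ^ 2 + 2 / (lam * μg)) / 2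
              + (1 / μg + 1 / lam) * (q / μb + (1 - q) / μg)))
      / (q * (1 / μb + 1 / lam) + p * (1 / μg + 1 / lam))) :
    ∀ q ∈ Set.Ioo (0:ℝ) 1, StrictAntiOn (fun p => Δ p q) (Set.Ioo (0:ℝ) 1) := by
  intro q hq p1 hp1 p2 hp2 h12
  obtain ⟨hq0, hq1⟩ := hq
  obtain ⟨hp10, hp11⟩ := hp1
  obtain ⟨hp20, hp21⟩ := hp2
  simp only [hΔ]
  have ha : 0 < 1 / μb := by positivity
  have hg : 0 < 1 / μg := by positivity
  have hL : 0 < 1 / lam := by positivity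
  have hga : 1 / μg < 1 / μb := one_div_lt_one_div_of_lt hμb h
  have hD1 : 0 < q * (1 / μb + 1 / lam) + p1 * (1 / μg + 1 / lam) :=
    add_pos (mul_pos hq0 (add_pos ha hL)) (mul_pos hp10 (add_pos hg hL))
  have hD2 : 0 < q * (1 / μb + 1 / lam) + p2 * (1 / μg + 1 / lam) :=
    add_pos (mul_pos hq0 (add_pos ha hL)) (mul_pos hp20 (add_pos hg hL))
  rw [div_lt_div_iff₀ hD2 hD1]
  have ident :
      (q * ((2 / μb ^ 2 + 2 / lam ^ 2 + 2 / (lam * μb)) / 2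
              + (1 / μb + 1 / lam) * (p1 / μg + (1 - p1) / μb))
        + p1 * ((2 / μg ^ 2 + 2 / lam ^ 2 + 2 / (lam * μg)) / 2
              + (1 / μg + 1 / lam) * (q / μb + (1 - q) / μg)))
        * (q * (1 / μb + 1 / lam) + p2 * (1 / μg + 1 / lam))
      - (q * ((2 / μb ^ 2 + 2 / lam ^ 2 + 2 / (lam * μb)) / 2
              + (1 / μb + 1 / lam) * (p2 / μg + (1 - p2) / μb))
        + p2 * ((2 / μg ^ 2 + 2 / lam ^ 2 + 2 / (lam * μg)) / 2
              + (1 / μg + 1 / lam) * (q / μb + (1 - q) / μg)))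
        * (q * (1 / μb + 1 / lam) + p1 * (1 / μg + 1 / lam))
      = (p2 - p1) * q * (1 / μb - 1 / μg)
        * ((1 / μb) * (1 / μg) + (1 / lam) * (1 / μb + 1 / μg)
            + (1 / μb + 1 / lam) * (1 / μg + 1 / lam)
            + q * (1 / μb + 1 / lam) * (1 / μb - 1 / μg)) := by
    ring
  have hpos : 0 < (p2 - p1) * q * (1 / μb - 1 / μg)
        * ((1 / μb) * (1 / μg) + (1 / lam) * (1 / μb + 1 / μg)
            + (1 / μb + 1 / lam) * (1 / μg + 1 / lam)
            + q * (1 / μb + 1 / lam) * (1 / μb - 1 / μg)) := by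
    have h1 : 0 < p2 - p1 := sub_pos.mpr h12
    have h2 : 0 < 1 / μb - 1 / μg := sub_pos.mpr hga
    have h3 : 0 < (1 / μb) * (1 / μg) + (1 / lam) * (1 / μb + 1 / μg)
            + (1 / μb + 1 / lam) * (1 / μg + 1 / lam)
            + q * (1 / μb + 1 / lam) * (1 / μb - 1 / μg) := by
      exact add_pos (add_pos (add_pos (mul_pos ha hg)
        (mul_pos hL (add_pos ha hg)))
        (mul_pos (add_pos ha hL) (add_pos hg hL)))
        (mul_pos (mul_pos hq0 (add_pos ha hL)) h2)
    exact mul_pos (mul_pos (mul_pos h1 hq0) h2) h3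
  linarith
end

section
/- Let λ, μ_b, μ_g > 0 with μ_g > μ_b, and define Δ(p,q) as in the Gilbert-Elliot service model: Δ(p,q) = (q·EQ_b + p·EQ_g)/(q·EY_b + p·EY_g) with EY_b = 1/μ_b + 1/λ, EY_g = 1/μ_g + 1/λ, EQ_b = (1/μ_b² + 1/λ² + 1/(λμ_b)) + EY_b·(p/μ_g + (1−p)/μ_b), EQ_g = (1/μ_g² + 1/λ² + 1/(λμ_g)) + EY_g·(q/μ_b + (1−q)/μ_g). Then for every fixed p ∈ (0,1), the function q ↦ Δ(p,q) is strictly increasing on (0,1). -/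
/-- Gilbert–Elliot server: the average age `Δ(p,q)` is strictly increasing in
`q` on `(0,1)` for every fixed `p ∈ (0,1)`. -/
theorem age_strictMono_in_q_GE_server
    (lam μb μg : ℝ) (hlam : 0 < lam) (hμb : 0 < μb) (hμg : 0 < μg)
    (h : μb < μg)
    (Δ : ℝ → ℝ → ℝ)
    (hΔ : ∀ p q : ℝ, Δ p q =
      (q * ((1 / μb ^ 2 + 1 / lam ^ 2 + 1 / (lam * μb))
              + (1 / μb + 1 / lam) * (p / μg + (1 - p) / μb))
        + p * ((1 / μg ^ 2 + 1 / lam ^ 2 + 1 / (lam * μg))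
              + (1 / μg + 1 / lam) * (q / μb + (1 - q) / μg)))
      / (q * (1 / μb + 1 / lam) + p * (1 / μg + 1 / lam))) :
    ∀ p ∈ Set.Ioo (0:ℝ) 1, StrictMonoOn (fun q => Δ p q) (Set.Ioo (0:ℝ) 1) := by
  intro p hp q1 hq1 q2 hq2 hlt
  simp only [hΔ]
  set s : ℝ := 1 / lam with hs_def
  set g : ℝ := 1 / μg with hg_def
  set b : ℝ := 1 / μb with hb_def
  have hs : 0 < s := by positivity
  have hg : 0 < g := by positivity
  have hb : 0 < b := by positivity
  have hgb : g < b := one_div_lt_one_div_of_lt hμb h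
  -- numerator and denominator as functions of q
  set N : ℝ → ℝ := fun q =>
      q * ((1 / μb ^ 2 + 1 / lam ^ 2 + 1 / (lam * μb))
              + (1 / μb + 1 / lam) * (p / μg + (1 - p) / μb))
        + p * ((1 / μg ^ 2 + 1 / lam ^ 2 + 1 / (lam * μg))
              + (1 / μg + 1 / lam) * (q / μb + (1 - q) / μg)) with hN
  set D : ℝ → ℝ := fun q => q * (1 / μb + 1 / lam) + p * (1 / μg + 1 / lam) with hD
  have hD1 : 0 < D q1 :=
    add_pos (mul_pos hq1.1 (by positivity)) (mul_pos hp.1 (by positivity))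
  have hD2 : 0 < D q2 :=
    add_pos (mul_pos hq2.1 (by positivity)) (mul_pos hp.1 (by positivity))
  show N q1 / D q1 < N q2 / D q2
  rw [div_lt_div_iff₀ hD1 hD2]
  set K : ℝ := 2 * g * b + 2 * s * (b + g) + s ^ 2 - p * (b - g) * (g + s) with hK_def
  have hK : 0 < K := by
    nlinarith [mul_pos (sub_pos.2 hgb) (add_pos hg hs), mul_pos hg hb,
      mul_pos hs hb, mul_pos hs hg, sq_nonneg s, hp.1, hp.2,
      mul_nonneg (mul_nonneg (sub_nonneg.2 hp.2.le) (sub_pos.2 hgb).le) (add_pos hg hs).le]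
  have key : N q2 * D q1 - N q1 * D q2 = (q2 - q1) * (p * ((b - g) * K)) := by
    simp only [hN, hD, hK_def, hs_def, hg_def, hb_def]
    field_simp
    ring
  have hpos : 0 < (q2 - q1) * (p * ((b - g) * K)) :=
    mul_pos (sub_pos.2 hlt) (mul_pos hp.1 (mul_pos (sub_pos.2 hgb) hK))
  linarith [key, hpos]
end

section
/- Let μ, λ_b, λ_g > 0 with λ_g > λ_b, and for p, q ∈ (0,1) define Δ(p,q) = (q·EQ_b + p·EQ_g)/(q·EY_b + p·EY_g) where EY_b = 1/μ + 1/λ_b, EY_g = 1/μ + 1/λ_g, EQ_b = (1/μ² + 1/λ_b² + 1/(μλ_b)) + 1/μ² + 1/(μλ_b), EQ_g = (1/μ² + 1/λ_g² + 1/(μλ_g)) + 1/μ² + 1/(μλ_g). Then for every fixed q ∈ (0,1), p ↦ Δ(p,q) is strictly decreasing on (0,1). -/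
/-- Gilbert–Elliot sampler: the average age `Δ(p,q)` is strictly decreasing in
`p` on `(0,1)` for every fixed `q ∈ (0,1)`. -/
theorem age_strictAnti_in_p_GE_sampler
    (μ lamb lamg : ℝ) (hμ : 0 < μ) (hlamb : 0 < lamb) (hlamg : 0 < lamg)
    (h : lamb < lamg)
    (Δ : ℝ → ℝ → ℝ)
    (hΔ : ∀ p q : ℝ, Δ p q =
      (q * ((1 / μ ^ 2 + 1 / lamb ^ 2 + 1 / (μ * lamb)) + 1 / μ ^ 2 + 1 / (μ * lamb))
        + p * ((1 / μ ^ 2 + 1 / lamg ^ 2 + 1 / (μ * lamg)) + 1 / μ ^ 2 + 1 / (μ * lamg)))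
      / (q * (1 / μ + 1 / lamb) + p * (1 / μ + 1 / lamg))) :
    ∀ q ∈ Set.Ioo (0:ℝ) 1, StrictAntiOn (fun p => Δ p q) (Set.Ioo (0:ℝ) 1) := by
  intro q hq p₁ hp₁ p₂ hp₂ hp
  obtain ⟨hq0, -⟩ := hq
  obtain ⟨hp₁0, -⟩ := hp₁
  obtain ⟨hp₂0, -⟩ := hp₂
  simp only [hΔ]
  have hA : 0 < (1:ℝ) / μ + 1 / lamb := by positivity
  have hB : 0 < (1:ℝ) / μ + 1 / lamg := by positivity
  have hd₁ : 0 < q * (1 / μ + 1 / lamb) + p₁ * (1 / μ + 1 / lamg) := by positivity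
  have hd₂ : 0 < q * (1 / μ + 1 / lamb) + p₂ * (1 / μ + 1 / lamg) := by positivity
  rw [div_lt_div_iff₀ hd₂ hd₁]
  have key : 0 < (1/lamb - 1/lamg) * ((1/μ) * (1/lamb + 1/lamg) + (1/lamb) * (1/lamg)) := by
    have : 1/lamg < 1/lamb := one_div_lt_one_div_of_lt hlamb h
    have h1 : 0 < 1/lamb - 1/lamg := by linarith
    positivity
  have hμ2 : (1:ℝ)/μ^2 = (1/μ) * (1/μ) := by field_simp
  have hb2 : (1:ℝ)/lamb^2 = (1/lamb) * (1/lamb) := by field_simp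
  have hg2 : (1:ℝ)/lamg^2 = (1/lamg) * (1/lamg) := by field_simp
  have hmb : (1:ℝ)/(μ*lamb) = (1/μ) * (1/lamb) := by rw [one_div_mul_eq_div, div_div]; ring_nf
  have hmg : (1:ℝ)/(μ*lamg) = (1/μ) * (1/lamg) := by rw [one_div_mul_eq_div, div_div]; ring_nf
  rw [hμ2, hb2, hg2, hmb, hmg]
  nlinarith [mul_pos (mul_pos hq0 (sub_pos.mpr hp)) key]
end

section
/- With the same definitions as the Gilbert-Elliot sampler age Δ(p,q) (μ, λ_b, λ_g > 0, λ_g > λ_b), for every fixed p ∈ (0,1), the function q ↦ Δ(p,q) is strictly increasing on (0,1). -/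
lemma GE_key (a b g p q1 q2 : ℝ) (ha : 0 < a) (hb : 0 < b) (hg : 0 < g)
    (hgb : g < b) (hp : 0 < p) (h1 : 0 < q1) (hlt : q1 < q2) :
    (q1 * (2*a^2 + b^2 + 2*a*b) + p * (2*a^2 + g^2 + 2*a*g)) / (q1 * (a + b) + p * (a + g))
      < (q2 * (2*a^2 + b^2 + 2*a*b) + p * (2*a^2 + g^2 + 2*a*g)) / (q2 * (a + b) + p * (a + g)) := by
  have h2 : 0 < q2 := h1.trans hlt
  have hd1 : 0 < q1 * (a + b) + p * (a + g) :=
    add_pos (mul_pos h1 (add_pos ha hb)) (mul_pos hp (add_pos ha hg))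
  have hd2 : 0 < q2 * (a + b) + p * (a + g) :=
    add_pos (mul_pos h2 (add_pos ha hb)) (mul_pos hp (add_pos ha hg))
  rw [div_lt_div_iff₀ hd1 hd2]
  nlinarith [mul_pos (mul_pos hp (sub_pos.2 hlt))
    (mul_pos (sub_pos.2 hgb) (by nlinarith [mul_pos ha hg, mul_pos ha hb, mul_pos hb hg] : (0:ℝ) < a*g + a*b + b*g))]

/-- Gilbert–Elliot sampler: the average age `Δ(p,q)` is strictly increasing in
`q` on `(0,1)` for every fixed `p ∈ (0,1)`. -/
theorem age_strictMono_in_q_GE_sampler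
    (μ lamb lamg : ℝ) (hμ : 0 < μ) (hlamb : 0 < lamb) (hlamg : 0 < lamg)
    (h : lamb < lamg)
    (Δ : ℝ → ℝ → ℝ)
    (hΔ : ∀ p q : ℝ, Δ p q =
      (q * (1 / μ ^ 2 + 1 / lamb ^ 2 + 1 / (μ * lamb) + 1 / μ ^ 2 + 1 / (μ * lamb))
        + p * (1 / μ ^ 2 + 1 / lamg ^ 2 + 1 / (μ * lamg) + 1 / μ ^ 2 + 1 / (μ * lamg)))
      / (q * (1 / μ + 1 / lamb) + p * (1 / μ + 1 / lamg))) :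
    ∀ p ∈ Set.Ioo (0:ℝ) 1, StrictMonoOn (fun q => Δ p q) (Set.Ioo (0:ℝ) 1) := by
  intro p hp q1 hq1 q2 hq2 hlt
  have ha : 0 < 1/μ := by positivity
  have hb : 0 < 1/lamb := by positivity
  have hg : 0 < 1/lamg := by positivity
  have hgb : 1/lamg < 1/lamb := one_div_lt_one_div_of_lt hlamb h
  have e : ∀ q : ℝ, Δ p q =
      (q * (2*(1/μ)^2 + (1/lamb)^2 + 2*(1/μ)*(1/lamb))
        + p * (2*(1/μ)^2 + (1/lamg)^2 + 2*(1/μ)*(1/lamg)))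
      / (q * (1/μ + 1/lamb) + p * (1/μ + 1/lamg)) := by
    intro q; rw [hΔ]; ring_nf
  simp only [e]
  exact GE_key (1/μ) (1/lamb) (1/lamg) p q1 q2 ha hb hg hgb hp.1 hq1.1 hlt
end

section
/- Let λ, μ_b, μ_g > 0 with μ_g > μ_b, and let α > 0. Define Δ(p) = (α·EQ_b(p) + EQ_g(p))/(α·EY_b + EY_g), where EY_b = 1/μ_b + 1/λ, EY_g = 1/μ_g + 1/λ, EQ_b(p) = (1/μ_b² + 1/λ² + 1/(λμ_b)) + EY_b·(p/μ_g + (1−p)/μ_b), and EQ_g(p) = (1/μ_g² + 1/λ² + 1/(λμ_g)) + EY_g·(αp/μ_b + (1−αp)/μ_g). Then Δ(p) is strictly decreasing in p on (0, min(1, 1/α)). -/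
/-- Gilbert–Elliot server under the budget constraint `q = α p`: the average
age `Δ(p)` is strictly decreasing in `p` on `(0, min 1 (1/α))`. -/
theorem age_strictAnti_on_constraint_line
    (lam μb μg α : ℝ) (hlam : 0 < lam) (hμb : 0 < μb) (hμg : 0 < μg)
    (h : μb < μg) (hα : 0 < α)
    (Δ : ℝ → ℝ)
    (hΔ : ∀ p : ℝ, Δ p =
      (α * ((1 / μb ^ 2 + 1 / lam ^ 2 + 1 / (lam * μb))
              + (1 / μb + 1 / lam) * (p / μg + (1 - p) / μb))
        + ((1 / μg ^ 2 + 1 / lam ^ 2 + 1 / (lam * μg))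
              + (1 / μg + 1 / lam) * (α * p / μb + (1 - α * p) / μg)))
      / (α * (1 / μb + 1 / lam) + (1 / μg + 1 / lam))) :
    StrictAntiOn Δ (Set.Ioo (0:ℝ) (min 1 (1 / α))) := by
  intro a _ b _ hab
  rw [hΔ, hΔ]
  have hD : 0 < α * (1 / μb + 1 / lam) + (1 / μg + 1 / lam) := by positivity
  rw [div_lt_div_iff_of_pos_right hD]
  have h1 : (0 : ℝ) < 1 / μb - 1 / μg := by
    rw [sub_pos]; exact one_div_lt_one_div_of_lt hμb h
  have key :
      (α * (1 / μb ^ 2 + 1 / lam ^ 2 + 1 / (lam * μb)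
              + (1 / μb + 1 / lam) * (a / μg + (1 - a) / μb))
        + (1 / μg ^ 2 + 1 / lam ^ 2 + 1 / (lam * μg)
              + (1 / μg + 1 / lam) * (α * a / μb + (1 - α * a) / μg)))
      - (α * (1 / μb ^ 2 + 1 / lam ^ 2 + 1 / (lam * μb)
              + (1 / μb + 1 / lam) * (b / μg + (1 - b) / μb))
        + (1 / μg ^ 2 + 1 / lam ^ 2 + 1 / (lam * μg)
              + (1 / μg + 1 / lam) * (α * b / μb + (1 - α * b) / μg)))
      = α * (b - a) * (1 / μb - 1 / μg) ^ 2 := by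
    field_simp
    ring
  nlinarith [mul_pos (mul_pos hα (sub_pos.mpr hab)) (mul_pos h1 h1)]
end

section
/- Let μ_g > μ_b > 0 and λ > 0, and let Δ(p,q) be the Gilbert-Elliot-server average age (as defined via EQ_b, EQ_g, EY_b, EY_g). Then for all p, q ∈ (0,1): 1/λ + 2/μ_g − 1/(λ+μ_g) < Δ(p,q) < 1/λ + 2/μ_b − 1/(λ+μ_b); i.e., the mixed-state age is strictly between the pure good-state age Δ_g and the pure bad-state age Δ_b. -/
lemma aux_lo (a b g p q : ℝ) (ha : 0 < a) (hg : 0 < g) (hbg : g < b)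
    (hp0 : 0 < p) (hp1 : p < 1) (hq0 : 0 < q) :
    a + 2*g - a*g/(a+g) <
      (q*(b^2+a^2+a*b+(b+a)*(p*g+(1-p)*b)) + p*(g^2+a^2+a*g+(g+a)*(q*b+(1-q)*g)))
        / (q*(b+a)+p*(g+a)) := by
  have hb : 0 < b := hg.trans hbg
  have hsum : (0:ℝ) < a + g := by linarith
  have hD : (0:ℝ) < q*(b+a)+p*(g+a) := by
    have := mul_pos hq0 (by linarith : (0:ℝ) < b+a)
    have := mul_pos hp0 (by linarith : (0:ℝ) < g+a)
    linarith
  rw [lt_div_iff₀ hD]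
  have hL : a + 2*g - a*g/(a+g) = (a^2+2*a*g+2*g^2)/(a+g) := by
    field_simp; ring
  rw [hL, div_mul_eq_mul_div, div_lt_iff₀ hsum]
  have key : (q*(b^2+a^2+a*b+(b+a)*(p*g+(1-p)*b)) + p*(g^2+a^2+a*g+(g+a)*(q*b+(1-q)*g)))*(a+g)
      - (a^2+2*a*g+2*g^2)*(q*(b+a)+p*(g+a))
      = q*((b-g)*((a+b)*(a+g)+2*a*g+g^2) + (1-p)*(a+g)*(b-g)^2) := by ring
  have hpos : 0 < q*((b-g)*((a+b)*(a+g)+2*a*g+g^2) + (1-p)*(a+g)*(b-g)^2) := by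
    have h1 : 0 < (b-g)*((a+b)*(a+g)+2*a*g+g^2) :=
      mul_pos (by linarith) (by nlinarith)
    have h2 : 0 < (1-p)*(a+g)*(b-g)^2 := by
      have : (0:ℝ) < (b-g)^2 := pow_pos (by linarith) 2
      have : 0 < (1-p)*(a+g) := mul_pos (by linarith) hsum
      nlinarith
    exact mul_pos hq0 (by linarith)
  linarith

lemma aux_hi (a b g p q : ℝ) (ha : 0 < a) (hg : 0 < g) (hbg : g < b)
    (hp0 : 0 < p) (hq0 : 0 < q) (hq1 : q < 1) :
    (q*(b^2+a^2+a*b+(b+a)*(p*g+(1-p)*b)) + p*(g^2+a^2+a*g+(g+a)*(q*b+(1-q)*g)))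
        / (q*(b+a)+p*(g+a)) < a + 2*b - a*b/(a+b) := by
  have hb : 0 < b := hg.trans hbg
  have hsum : (0:ℝ) < a + b := by linarith
  have hD : (0:ℝ) < q*(b+a)+p*(g+a) := by
    have := mul_pos hq0 (by linarith : (0:ℝ) < b+a)
    have := mul_pos hp0 (by linarith : (0:ℝ) < g+a)
    linarith
  rw [div_lt_iff₀ hD]
  have hL : a + 2*b - a*b/(a+b) = (a^2+2*a*b+2*b^2)/(a+b) := by
    field_simp; ring
  rw [hL, div_mul_eq_mul_div, lt_div_iff₀ hsum]
  have key : (a^2+2*a*b+2*b^2)*(q*(b+a)+p*(g+a))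
      - (q*(b^2+a^2+a*b+(b+a)*(p*g+(1-p)*b)) + p*(g^2+a^2+a*g+(g+a)*(q*b+(1-q)*g)))*(a+b)
      = p*((b-g)*(a^2+2*a*b+2*a*g+2*b*g) + q*(a+b)*(b-g)^2) := by ring
  have hpos : 0 < p*((b-g)*(a^2+2*a*b+2*a*g+2*b*g) + q*(a+b)*(b-g)^2) := by
    have h1 : 0 < (b-g)*(a^2+2*a*b+2*a*g+2*b*g) :=
      mul_pos (by linarith) (by nlinarith)
    have h2 : 0 < q*(a+b)*(b-g)^2 := mul_pos (mul_pos hq0 hsum) (pow_pos (by linarith) 2)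
    exact mul_pos hp0 (by linarith)
  linarith

/-- The Gilbert–Elliot-server mixed-state average age lies strictly between the
pure good-state age `Δ_g` and the pure bad-state age `Δ_b`. -/
theorem mixed_age_between_pure_ages
    (lam μb μg : ℝ) (hlam : 0 < lam) (hμb : 0 < μb) (h : μb < μg)
    (Δ : ℝ → ℝ → ℝ)
    (hΔ : ∀ p q : ℝ, Δ p q =
      (q * (1 / μb ^ 2 + 1 / lam ^ 2 + 1 / (lam * μb)
              + (1 / μb + 1 / lam) * (p / μg + (1 - p) / μb))
        + p * (1 / μg ^ 2 + 1 / lam ^ 2 + 1 / (lam * μg)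
              + (1 / μg + 1 / lam) * (q / μb + (1 - q) / μg)))
      / (q * (1 / μb + 1 / lam) + p * (1 / μg + 1 / lam))) :
    ∀ p ∈ Set.Ioo (0:ℝ) 1, ∀ q ∈ Set.Ioo (0:ℝ) 1,
      1 / lam + 2 / μg - 1 / (lam + μg) < Δ p q ∧
      Δ p q < 1 / lam + 2 / μb - 1 / (lam + μb) := by
  intro p hp q hq
  obtain ⟨hp0, hp1⟩ := hp
  obtain ⟨hq0, hq1⟩ := hq
  have hμg : 0 < μg := hμb.trans h
  set a := 1/lam with ha'
  set b := 1/μb with hb'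
  set g := 1/μg with hg'
  have ha : 0 < a := by positivity
  have hg : 0 < g := by positivity
  have hbg : g < b := by
    rw [hb', hg']
    exact one_div_lt_one_div_of_lt hμb h
  have hN : Δ p q =
      (q*(b^2+a^2+a*b+(b+a)*(p*g+(1-p)*b)) + p*(g^2+a^2+a*g+(g+a)*(q*b+(1-q)*g)))
        / (q*(b+a)+p*(g+a)) := by
    rw [hΔ p q, ha', hb', hg']
    congr 1 <;> ring
  have hBg : 1 / lam + 2 / μg - 1 / (lam + μg) = a + 2*g - a*g/(a+g) := by
    rw [ha', hg']
    have : lam + μg ≠ 0 := by positivity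
    field_simp
    ring
  have hBb : 1 / lam + 2 / μb - 1 / (lam + μb) = a + 2*b - a*b/(a+b) := by
    rw [ha', hb']
    have : lam + μb ≠ 0 := by positivity
    field_simp
    ring
  rw [hN, hBg, hBb]
  exact ⟨aux_lo a b g p q ha hg hbg hp0 hp1 hq0,
         aux_hi a b g p q ha hg hbg hp0 hq0 hq1⟩
end

section
/- Let S_b ~ Exp(μ_b), S_g ~ Exp(μ_g) with μ_g > μ_b > 0 and Z ~ Exp(λ), λ > 0, all independent. Set Y_b = S_b + Z, Y_g = S_g + Z. Then (1/2)·E[Y_b]·E[Y_g²] − (1/2)·E[Y_g]·E[Y_b²] + E[Y_b]·(E[S_g] − E[S_b])·((1−q)E[Y_g] + q·E[Y_b]) < 0 for all q ∈ [0,1]. -/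
lemma key_ineq (a c t q : ℝ) (hc : 0 < c) (hac : c < a) (ht : 0 < t) (hq : 0 ≤ q) :
    (a+t)*(c^2+c*t+t^2) - (c+t)*(a^2+a*t+t^2)
      + (a+t)*(c-a)*((1-q)*(c+t)+q*(a+t)) < 0 := by
  have heq : (a+t)*(c^2+c*t+t^2) - (c+t)*(a^2+a*t+t^2)
      + (a+t)*(c-a)*((1-q)*(c+t)+q*(a+t))
      = (c-a)*(2*a*c+2*t*(a+c)+t^2+q*(a+t)*(a-c)) := by ring
  rw [heq]
  apply mul_neg_of_neg_of_pos
  · linarith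
  · have h1 : 0 ≤ q*((a+t)*(a-c)) := mul_nonneg hq (by nlinarith)
    nlinarith

/-- The full numerator expression (equation (13)) of `∂Δ/∂p` for the
Gilbert–Elliot server age is negative for all `q ∈ [0,1]`; here the moments of
`Y_b = S_b + Z`, `Y_g = S_g + Z` for independent exponentials are as in the
hypotheses. -/
theorem derivative_numerator_negative
    (lam μb μg : ℝ) (hlam : 0 < lam) (hμb : 0 < μb) (h : μb < μg)
    (EYb EYg EYb2 EYg2 ESb ESg : ℝ)
    (hEYb : EYb = 1 / μb + 1 / lam) (hEYg : EYg = 1 / μg + 1 / lam)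
    (hEYb2 : EYb2 = 2 / μb ^ 2 + 2 / lam ^ 2 + 2 / (μb * lam))
    (hEYg2 : EYg2 = 2 / μg ^ 2 + 2 / lam ^ 2 + 2 / (μg * lam))
    (hESb : ESb = 1 / μb) (hESg : ESg = 1 / μg) :
    ∀ q ∈ Set.Icc (0:ℝ) 1,
      (1 / 2) * EYb * EYg2 - (1 / 2) * EYg * EYb2
        + EYb * (ESg - ESb) * ((1 - q) * EYg + q * EYb) < 0 := by
  intro q hq
  obtain ⟨hq0, hq1⟩ := hq
  have hμg : 0 < μg := hμb.trans h
  have hc : 0 < 1/μg := by positivity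
  have hac : 1/μg < 1/μb := by
    apply one_div_lt_one_div_of_lt hμb h
  have ht : 0 < 1/lam := by positivity
  have key := key_ineq (1/μb) (1/μg) (1/lam) q hc hac ht hq0
  have heq : (1 / 2) * EYb * EYg2 - (1 / 2) * EYg * EYb2
        + EYb * (ESg - ESb) * ((1 - q) * EYg + q * EYb)
      = (1/μb+1/lam)*((1/μg)^2+(1/μg)*(1/lam)+(1/lam)^2)
        - (1/μg+1/lam)*((1/μb)^2+(1/μb)*(1/lam)+(1/lam)^2)
        + (1/μb+1/lam)*(1/μg-1/μb)*((1-q)*(1/μg+1/lam)+q*(1/μb+1/lam)) := by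
    subst hEYb hEYg hEYb2 hEYg2 hESb hESg
    field_simp
    ring
  rw [heq]
  exact key
end

section
/- Let λ > 0, μ_g > μ_b > 0, and 0 < α < 1. Among pairs (p,q) ∈ (0,1]×(0,1] with q = αp, the Gilbert-Elliot-server average age Δ(p, αp) is minimized (in the limit/closure sense) at p = 1, q = α. -/
/-- Gilbert–Elliot server with budget line `q = α p`, `0 < α < 1`: among
`p ∈ (0,1]`, the average age `Δ(p, αp)` is minimized at `p = 1` (i.e. at
`(p,q) = (1,α)`). -/
theorem age_minimized_at_p_one
    (lam μb μg α : ℝ) (hlam : 0 < lam) (hμb : 0 < μb) (h : μb < μg)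
    (hα0 : 0 < α) (hα1 : α < 1)
    (Δ : ℝ → ℝ → ℝ)
    (hΔ : ∀ p q : ℝ, Δ p q =
      (q * (1 / μb ^ 2 + 1 / lam ^ 2 + 1 / (lam * μb)
              + (1 / μb + 1 / lam) * (p / μg + (1 - p) / μb))
        + p * (1 / μg ^ 2 + 1 / lam ^ 2 + 1 / (lam * μg)
              + (1 / μg + 1 / lam) * (q / μb + (1 - q) / μg)))
      / (q * (1 / μb + 1 / lam) + p * (1 / μg + 1 / lam))) :
    ∀ p ∈ Set.Ioc (0:ℝ) 1, Δ 1 α ≤ Δ p (α * p) := by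
  intro p hp
  obtain ⟨hp0, hp1⟩ := hp
  have hμg : 0 < μg := hμb.trans h
  have ha : 0 < 1/μb := by positivity
  have hb : 0 < 1/μg := by positivity
  have hl : 0 < 1/lam := by positivity
  have hba : 1/μg < 1/μb := one_div_lt_one_div_of_lt hμb h
  have e1 : (1:ℝ)/μb^2 = (1/μb)^2 := by rw [one_div, one_div, inv_pow]
  have e2 : (1:ℝ)/μg^2 = (1/μg)^2 := by rw [one_div, one_div, inv_pow]
  have e3 : (1:ℝ)/lam^2 = (1/lam)^2 := by rw [one_div, one_div, inv_pow]
  have e4 : (1:ℝ)/(lam*μb) = (1/lam)*(1/μb) := by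
    rw [one_div, one_div, one_div, mul_inv]
  have e5 : (1:ℝ)/(lam*μg) = (1/lam)*(1/μg) := by
    rw [one_div, one_div, one_div, mul_inv]
  have ediv : ∀ x : ℝ, ∀ y : ℝ, x / y = x * (1/y) := by
    intro x y; rw [div_eq_mul_one_div]
  rw [hΔ, hΔ, e1, e2, e3, e4, e5,
    ediv p μg, ediv (1-p) μb, ediv (α*p) μb, ediv (1-α*p) μg,
    ediv (1:ℝ) μg, ediv (1-(1:ℝ)) μb, ediv α μb, ediv (1-α) μg]
  set a := 1/μb with hadef
  set b := 1/μg with hbdef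
  set l := 1/lam with hldef
  rw [div_le_div_iff₀ (by positivity) (by positivity)]
  nlinarith [mul_nonneg (mul_nonneg (mul_nonneg hp0.le hα0.le)
      (mul_nonneg (sq_nonneg (a - b)) (sub_nonneg.2 hp1)))
      (by positivity : (0:ℝ) ≤ α*(a+l) + (b+l)),
    sq_nonneg (a-b), mul_pos hp0 hα0]
end

section
/- Let μ_g > μ_b > 0 and λ > 0. Define EY(μ) = 1/μ + 1/λ and EQ2(μ) = 2/μ² + 2/λ² + 2/(λμ). Then the function μ ↦ EQ2(μ)/EY(μ) is strictly decreasing on (0,∞); in particular EQ2(μ_b)/EY(μ_b) > EQ2(μ_g)/EY(μ_g). -/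
lemma ratio_eq (lam μ : ℝ) (hlam : 0 < lam) (hμ : 0 < μ) :
    (2 / μ ^ 2 + 2 / lam ^ 2 + 2 / (lam * μ)) / (1 / μ + 1 / lam)
      = 2 / lam + 2 * lam / (μ * (lam + μ)) := by
  have h1 : μ ≠ 0 := hμ.ne'
  have h2 : lam ≠ 0 := hlam.ne'
  have h3 : lam + μ ≠ 0 := by positivity
  have h4 : (1 / μ + 1 / lam) ≠ 0 := by positivity
  field_simp
  ring

/-- The ratio `EQ2(μ)/EY(μ)` with `EY(μ) = 1/μ + 1/λ`,
`EQ2(μ) = 2/μ² + 2/λ² + 2/(λμ)` is strictly decreasing in `μ` on `(0,∞)`;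
in particular it is larger at `μ_b` than at `μ_g > μ_b`. -/
theorem ratio_strictAnti_in_mu
    (lam μb μg : ℝ) (hlam : 0 < lam) (hμb : 0 < μb) (h : μb < μg) :
    StrictAntiOn
      (fun μ : ℝ => (2 / μ ^ 2 + 2 / lam ^ 2 + 2 / (lam * μ)) / (1 / μ + 1 / lam))
      (Set.Ioi (0:ℝ)) ∧
    (2 / μg ^ 2 + 2 / lam ^ 2 + 2 / (lam * μg)) / (1 / μg + 1 / lam)
      < (2 / μb ^ 2 + 2 / lam ^ 2 + 2 / (lam * μb)) / (1 / μb + 1 / lam) := by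
  have key : StrictAntiOn
      (fun μ : ℝ => (2 / μ ^ 2 + 2 / lam ^ 2 + 2 / (lam * μ)) / (1 / μ + 1 / lam))
      (Set.Ioi (0:ℝ)) := by
    intro x hx y hy hxy
    simp only [Set.mem_Ioi] at hx hy
    simp only []
    rw [ratio_eq lam x hlam hx, ratio_eq lam y hlam hy]
    have hxp : 0 < x * (lam + x) := by positivity
    have hlt : x * (lam + x) < y * (lam + y) := by nlinarith
    have : 2 * lam / (y * (lam + y)) < 2 * lam / (x * (lam + x)) := by
      apply div_lt_div_of_pos_left (by positivity) hxp hlt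
    linarith
  exact ⟨key, key (Set.mem_Ioi.mpr hμb) (Set.mem_Ioi.mpr (hμb.trans h)) h⟩
end
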